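/- arXiv:2403.15198 — 2 statements merged into one kernel-verified Lean document; each statement's English description precedes it below -/
import Mathlib

section
/- Let n ≥ 3 and let β ∈ ℝ^{n-1} be such that d_β is a metric or d_{−β} is a metric (i.e., β ∈ B>_n ∪ (−B>_n)). Then d^μ_β is neutral, i.e. d^μ_β(τσ, τπ) = d^μ_β(σ,π) for all permutations σ, π, τ ∈ S_n, if and only if μ is constant (μ_i = μ_j for all i, j ∈ [n]). -/
open Finset

noncomputable section

/-- `i >_σ j`: candidate `i` is ranked above candidate `j` by `σ`
(where `σ i` is the candidate in position `i`). -/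
def prefOver {n : ℕ} (σ : Equiv.Perm (Fin n)) (i j : Fin n) : Prop :=
  σ.symm i < σ.symm j

/-- `M(S,σ)`: the set of `>_σ`-maximal elements of `S` (a singleton when `S ≠ ∅`). -/
def bestSet {n : ℕ} (σ : Equiv.Perm (Fin n)) (S : Finset (Fin n)) : Finset (Fin n) :=
  S.filter fun x => ∀ y ∈ S, σ.symm x ≤ σ.symm y

/-- `△_S(σ,π) = M(S,σ) △ M(S,π)`. -/
def topDiff {n : ℕ} (σ π : Equiv.Perm (Fin n)) (S : Finset (Fin n)) : Finset (Fin n) :=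
  symmDiff (bestSet σ S) (bestSet π S)

/-- The `(β,μ)`-top-difference distance; `β i` is the weight of menus of size `i+2`. -/
def dTD (n : ℕ) (β : Fin (n - 1) → ℝ) (μ : Fin n → ℝ)
    (σ π : Equiv.Perm (Fin n)) : ℝ :=
  ∑ S ∈ Finset.univ.filter (fun S : Finset (Fin n) => 2 ≤ S.card),
    (if h : S.card - 2 < n - 1 then β ⟨S.card - 2, h⟩ else 0) *
      ∑ x ∈ topDiff σ π S, μ x

def IsSemimetric {α : Type*} (d : α → α → ℝ) : Prop :=
  (∀ x y, 0 ≤ d x y) ∧ (∀ x y, d x y = d y x) ∧ (∀ x, d x x = 0) ∧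
    (∀ x y z, d x z ≤ d x y + d y z)

def IsMetricFn {α : Type*} (d : α → α → ℝ) : Prop :=
  IsSemimetric d ∧ ∀ x y, d x y = 0 → x = y

/-!
Relabelling the candidates by `τ` turns `d^μ_β(τσ, τπ)` into `d^{μ ∘ τ}_β(σ, π)`, so a constant
`μ` gives neutrality. Conversely, swapping the two top candidates `0` and `1` changes the top
exactly of the menus containing both, so `d^μ_β(1, (0 1)) = (μ 0 + μ 1) · C` with
`C = ∑_{S ∋ 0, 1} β_{|S|}`, and `C ≠ 0` because `d_β` or `d_{-β} = -d_β` separates points.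
Neutrality then makes `μ (τ 0) + μ (τ 1)` independent of `τ`; moving one of the two candidates
at a time to a third one forces `μ` to be constant.
-/

section Relabeling

variable {n : ℕ}

lemma mem_bestSet {σ : Equiv.Perm (Fin n)} {S : Finset (Fin n)} {x : Fin n} :
    x ∈ bestSet σ S ↔ x ∈ S ∧ ∀ y ∈ S, σ.symm x ≤ σ.symm y :=
  Finset.mem_filter

lemma bestSet_eq_singleton {σ : Equiv.Perm (Fin n)} {S : Finset (Fin n)} {x : Fin n}
    (hx : x ∈ S) (hmin : ∀ y ∈ S, σ.symm x ≤ σ.symm y) : bestSet σ S = {x} := by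
  ext y
  rw [mem_bestSet, Finset.mem_singleton]
  constructor
  · rintro ⟨hy, hymin⟩
    exact σ.symm.injective (le_antisymm (hymin x hx) (hmin y hy))
  · rintro rfl
    exact ⟨hx, hmin⟩

lemma bestSet_congr {σ π : Equiv.Perm (Fin n)} {S : Finset (Fin n)}
    (h : ∀ x ∈ S, ∀ y ∈ S, σ.symm x ≤ σ.symm y ↔ π.symm x ≤ π.symm y) :
    bestSet σ S = bestSet π S :=
  Finset.filter_congr fun x hx => forall₂_congr fun y hy => h x hx y hy

lemma bestSet_mul_left (τ σ : Equiv.Perm (Fin n)) (S : Finset (Fin n)) :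
    bestSet (τ * σ) S = (bestSet σ (S.image τ.symm)).image τ := by
  ext x
  simp only [mem_bestSet, Finset.mem_image, forall_exists_index, and_imp,
    forall_apply_eq_imp_iff₂]
  constructor
  · rintro ⟨hx, hmin⟩
    exact ⟨τ.symm x, ⟨⟨x, hx, rfl⟩, hmin⟩, τ.apply_symm_apply x⟩
  · rintro ⟨_, ⟨⟨x, hx, rfl⟩, hmin⟩, rfl⟩
    rw [τ.apply_symm_apply]
    exact ⟨hx, hmin⟩

lemma topDiff_mul_left (τ σ π : Equiv.Perm (Fin n)) (S : Finset (Fin n)) :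
    topDiff (τ * σ) (τ * π) S = (topDiff σ π (S.image τ.symm)).image τ := by
  rw [topDiff, bestSet_mul_left, bestSet_mul_left, ← Finset.image_symmDiff _ _ τ.injective]
  rfl

lemma dTD_mul_left (β : Fin (n - 1) → ℝ) (μ : Fin n → ℝ) (τ σ π : Equiv.Perm (Fin n)) :
    dTD n β μ (τ * σ) (τ * π) = dTD n β (μ ∘ τ) σ π := by
  unfold dTD
  refine Finset.sum_nbij' (fun S => S.image τ.symm) (fun S => S.image τ) ?_ ?_ ?_ ?_ ?_
  · intro S hS
    simp only [Finset.mem_filter, Finset.mem_univ, true_and] at hS ⊢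
    rwa [Finset.card_image_of_injective _ τ.symm.injective]
  · intro S hS
    simp only [Finset.mem_filter, Finset.mem_univ, true_and] at hS ⊢
    rwa [Finset.card_image_of_injective _ τ.injective]
  · intro S _
    simp [Finset.image_image]
  · intro S _
    simp [Finset.image_image]
  · intro S _
    rw [Finset.card_image_of_injective _ τ.symm.injective, topDiff_mul_left,
      Finset.sum_image fun x _ y _ h => τ.injective h]
    rfl

lemma dTD_neg (β : Fin (n - 1) → ℝ) (μ : Fin n → ℝ) (σ π : Equiv.Perm (Fin n)) :
    dTD n (-β) μ σ π = -dTD n β μ σ π := by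
  unfold dTD
  rw [← Finset.sum_neg_distrib]
  refine Finset.sum_congr rfl fun S _ => ?_
  split_ifs <;> simp

lemma eq_of_dTD_eq_zero {β : Fin (n - 1) → ℝ}
    (hβ : IsMetricFn (dTD n β fun _ => (1 : ℝ)) ∨ IsMetricFn (dTD n (-β) fun _ => (1 : ℝ)))
    {σ π : Equiv.Perm (Fin n)} (h : dTD n β (fun _ => 1) σ π = 0) : σ = π := by
  rcases hβ with hβ | hβ
  · exact hβ.2 σ π h
  · exact hβ.2 σ π (by rw [dTD_neg, h, neg_zero])

end Relabeling

section AdjacentSwap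

variable {n : ℕ}

lemma swap_zero_one_le_swap_zero_one_iff {x y : Fin (n + 2)}
    (hxy : ¬(x = 0 ∧ y = 1)) (hyx : ¬(x = 1 ∧ y = 0)) :
    Equiv.swap 0 1 x ≤ Equiv.swap 0 1 y ↔ x ≤ y := by
  simp only [Equiv.swap_apply_def]
  simp only [Fin.ext_iff, Fin.le_iff_val_le_val, Fin.val_zero, Fin.val_one] at *
  split_ifs <;> simp only [Fin.val_zero, Fin.val_one] at * <;> omega

lemma topDiff_one_swap_zero_one (S : Finset (Fin (n + 2))) :
    topDiff 1 (Equiv.swap 0 1) S = if 0 ∈ S ∧ 1 ∈ S then {0, 1} else ∅ := by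
  unfold topDiff
  split_ifs with h
  · have h₀ : bestSet 1 S = {0} :=
      bestSet_eq_singleton h.1 fun y _ => Fin.zero_le _
    have h₁ : bestSet (Equiv.swap 0 1) S = {1} :=
      bestSet_eq_singleton h.2 fun y _ => by simp
    rw [h₀, h₁, (Finset.disjoint_singleton.2 zero_ne_one).symmDiff_eq_sup]
    rfl
  · have hsame : bestSet 1 S = bestSet (Equiv.swap 0 1) S := bestSet_congr fun x hx y hy => by
      rw [Equiv.symm_swap, swap_zero_one_le_swap_zero_one_iff]
      · rfl
      all_goals rintro ⟨rfl, rfl⟩; tauto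
    rw [hsame, symmDiff_self]
    rfl

def pairWeight (n : ℕ) (β : Fin (n - 1) → ℝ) (a b : Fin n) : ℝ :=
  ∑ S ∈ (Finset.univ.filter fun S : Finset (Fin n) => 2 ≤ S.card).filter
      (fun S => a ∈ S ∧ b ∈ S),
    if h : S.card - 2 < n - 1 then β ⟨S.card - 2, h⟩ else 0

lemma dTD_one_swap_zero_one (β : Fin (n + 2 - 1) → ℝ) (μ : Fin (n + 2) → ℝ) :
    dTD (n + 2) β μ 1 (Equiv.swap 0 1) = (μ 0 + μ 1) * pairWeight (n + 2) β 0 1 := by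
  rw [dTD, pairWeight, Finset.sum_filter fun S => 0 ∈ S ∧ 1 ∈ S, Finset.mul_sum]
  refine Finset.sum_congr rfl fun S _ => ?_
  rw [topDiff_one_swap_zero_one]
  split_ifs <;> simp [Finset.sum_pair (zero_ne_one' (Fin (n + 2))), mul_comm]

lemma pairWeight_ne_zero {β : Fin (n + 2 - 1) → ℝ}
    (hβ : IsMetricFn (dTD (n + 2) β fun _ => (1 : ℝ)) ∨
      IsMetricFn (dTD (n + 2) (-β) fun _ => (1 : ℝ))) :
    pairWeight (n + 2) β 0 1 ≠ 0 := by
  intro h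
  have : (1 : Equiv.Perm (Fin (n + 2))) = Equiv.swap 0 1 :=
    eq_of_dTD_eq_zero hβ (by rw [dTD_one_swap_zero_one, h, mul_zero])
  exact zero_ne_one (Equiv.swap_eq_one_iff.1 this.symm)

end AdjacentSwap

lemma apply_eq_of_forall_perm_add_apply_eq {α : Type*} [DecidableEq α] {μ : α → ℝ}
    {a b c : α} (hab : a ≠ b) (hac : a ≠ c) (hbc : b ≠ c)
    (h : ∀ τ : Equiv.Perm α, μ (τ a) + μ (τ b) = μ a + μ b) (i : α) : μ i = μ a := by
  have eq_b : ∀ k ≠ a, μ k = μ b := fun k hk => by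
    have := h (Equiv.swap b k)
    rw [Equiv.swap_apply_of_ne_of_ne hab hk.symm, Equiv.swap_apply_left] at this
    linarith
  have eq_a : ∀ k ≠ b, μ k = μ a := fun k hk => by
    have := h (Equiv.swap a k)
    rw [Equiv.swap_apply_left, Equiv.swap_apply_of_ne_of_ne hab.symm hk.symm] at this
    linarith
  rcases eq_or_ne i a with rfl | hia
  · rfl
  · rw [eq_b i hia, ← eq_b c hac.symm, eq_a c hbc.symm]

theorem stmt3 (n : ℕ) (hn : 3 ≤ n) (β : Fin (n - 1) → ℝ)
    (hβ : IsMetricFn (dTD n β fun _ => (1 : ℝ)) ∨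
          IsMetricFn (dTD n (-β) fun _ => (1 : ℝ)))
    (μ : Fin n → ℝ) :
    (∀ τ σ π : Equiv.Perm (Fin n), dTD n β μ (τ * σ) (τ * π) = dTD n β μ σ π) ↔
      (∀ i j : Fin n, μ i = μ j) := by
  obtain ⟨m, rfl⟩ : ∃ m, n = m + 3 := ⟨n - 3, by omega⟩
  constructor
  · intro hneutral
    have hsum : ∀ τ : Equiv.Perm (Fin (m + 3)), μ (τ 0) + μ (τ 1) = μ 0 + μ 1 := fun τ => by
      have := hneutral τ 1 (Equiv.swap 0 1)
      rw [dTD_mul_left, dTD_one_swap_zero_one, dTD_one_swap_zero_one] at this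
      exact mul_right_cancel₀ (pairWeight_ne_zero hβ) this
    have hconst := apply_eq_of_forall_perm_add_apply_eq (c := 2) (by simp)
      (by simp [Fin.ext_iff, Nat.mod_eq_of_lt]) (by simp [Fin.ext_iff, Nat.mod_eq_of_lt]) hsum
    intro i j
    rw [hconst i, hconst j]
  · intro hconst τ σ π
    rw [dTD_mul_left]
    exact congrArg (dTD (m + 3) β · σ π) (funext fun x => hconst (τ x) x)
end
end

section
/- For every n ≥ 2, every β ∈ ℝ^{n-1}, every μ ∈ ℝⁿ, and all σ, π ∈ S_n: d^μ_β(σ,π) = Σ_{x ∈ [n]} ( f_β(|x^{↓,π}|) + f_β(|x^{↓,σ}|) − 2 f_β(|x^{↓,σ} ∩ x^{↓,π}|) ) μ_x. -/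
/-!
Fix a candidate `x`. It lies in `M(S,σ) △ M(S,π)` exactly when it is the top of `S` for one
ranking but not the other, and it is the `σ`-top of `S` iff `S = {x} ∪ T` with
`T ⊆ x^{↓,σ}` nonempty. Since `|S| = |T| + 1`, summing `β_{|S|}` over such menus gives
`Σ_k β_k C(|x^{↓,σ}|, k - 1) = f_β(|x^{↓,σ}|)`; being the top for both rankings means
`T ⊆ x^{↓,σ} ∩ x^{↓,π}`. Inclusion–exclusion `1_{A△B} = 1_A + 1_B - 2·1_{A∩B}` then gives the
coefficient of `μ_x`.
-/

open Finset

noncomputable section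

/-- `x^{↓,σ}`: the set of candidates ranked strictly below `x` by `σ`. -/
def downSet {n : ℕ} (σ : Equiv.Perm (Fin n)) (x : Fin n) : Finset (Fin n) :=
  Finset.univ.filter fun i => σ.symm x < σ.symm i

/-- `f_β(t) = Σ_{k=2}^n β_k C(t,k-1)`. -/
def fβ (n : ℕ) (β : Fin (n - 1) → ℝ) (t : ℕ) : ℝ :=
  ∑ k : Fin (n - 1), β k * (t.choose (k.1 + 1) : ℝ)

namespace Finset

variable {α M : Type*} [Fintype α] [DecidableEq α] [AddCommMonoid M]

theorem sum_two_le_card_ite_subset_insert {x : α} {D : Finset α} (hx : x ∉ D) (g : ℕ → M) :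
    ∑ S ∈ univ.filter (fun S : Finset α => 2 ≤ #S),
        (if x ∈ S ∧ S ⊆ insert x D then g #S else 0) =
      ∑ j ∈ range #D, (#D).choose (j + 1) • g (j + 2) := by
  have hpowerset : ∑ S ∈ univ.filter (fun S : Finset α => 2 ≤ #S),
        (if x ∈ S ∧ S ⊆ insert x D then g #S else 0) =
      ∑ S ∈ (insert x D).powerset, (if x ∈ S ∧ 2 ≤ #S then g #S else 0) := by
    rw [← filter_subset_univ, sum_filter, sum_filter]
    refine sum_congr rfl fun S _ => ?_
    simp only [← ite_and]
    exact if_congr (by tauto) rfl rfl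
  have hnotMem : ∀ T ∈ D.powerset, x ∉ T := fun T hT hxT => hx (mem_powerset.1 hT hxT)
  have hinsert : ∀ T ∈ D.powerset, (if x ∈ insert x T ∧ 2 ≤ #(insert x T) then g #(insert x T)
      else 0) = if 1 ≤ #T then g (#T + 1) else 0 := fun T hT => by
    rw [card_insert_of_notMem (hnotMem T hT)]
    simp
  rw [hpowerset, sum_powerset_insert hx,
    sum_eq_zero fun T hT => if_neg fun h => hnotMem T hT h.1, zero_add, sum_congr rfl hinsert,
    sum_powerset_apply_card (fun m => if 1 ≤ m then g (m + 1) else 0), sum_range_succ']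
  simp

end Finset

/-- The weight `β_k` of a menu of size `k`, in the form in which it appears in `dTD`
(so `β_k` is `β ⟨k - 2, _⟩`, and `0` when `k - 2` is out of range). -/
def menuWeight (n : ℕ) (β : Fin (n - 1) → ℝ) (k : ℕ) : ℝ :=
  if h : k - 2 < n - 1 then β ⟨k - 2, h⟩ else 0

theorem sum_range_choose_menuWeight (n : ℕ) (β : Fin (n - 1) → ℝ) (t : ℕ) :
    ∑ j ∈ range t, t.choose (j + 1) • menuWeight n β (j + 2) = fβ n β t := by
  set u : ℕ → ℝ := fun j => t.choose (j + 1) • menuWeight n β (j + 2)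
  have hu : ∀ j ≥ min t (n - 1), u j = 0 := by
    intro j hj
    rcases min_le_iff.1 hj with hj | hj
    · simp [u, Nat.choose_eq_zero_of_lt (Nat.lt_succ_of_le hj)]
    · simp [u, menuWeight, not_lt.2 hj]
  have hfβ : fβ n β t = ∑ j ∈ range (n - 1), u j := by
    rw [fβ, ← Fin.sum_univ_eq_sum_range]
    refine sum_congr rfl fun k _ => ?_
    simp [u, menuWeight, mul_comm]
  rw [hfβ, eventually_constant_sum hu (min_le_left _ _),
    eventually_constant_sum hu (min_le_right _ _)]

theorem ite_mem_symmDiff {α R : Type*} [DecidableEq α] [Ring R] (A B : Finset α) (x : α) (c : R) :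
    (if x ∈ symmDiff A B then c else 0) =
      (if x ∈ A then c else 0) + (if x ∈ B then c else 0) - 2 * if x ∈ A ∧ x ∈ B then c else 0 := by
  by_cases hA : x ∈ A <;> by_cases hB : x ∈ B <;> simp [mem_symmDiff, hA, hB, two_mul]

theorem mem_bestSet_iff {n : ℕ} (σ : Equiv.Perm (Fin n)) (S : Finset (Fin n)) (x : Fin n) :
    x ∈ bestSet σ S ↔ x ∈ S ∧ S ⊆ insert x (downSet σ x) := by
  rw [bestSet, mem_filter, subset_iff, and_congr_right_iff]
  refine fun _ => forall₂_congr fun y _ => ?_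
  rw [mem_insert, downSet, mem_filter, le_iff_lt_or_eq, σ.symm.injective.eq_iff]
  simp [eq_comm, or_comm]

theorem mem_bestSet_and_mem_bestSet_iff {n : ℕ} (σ π : Equiv.Perm (Fin n)) (S : Finset (Fin n))
    (x : Fin n) : x ∈ bestSet σ S ∧ x ∈ bestSet π S ↔
      x ∈ S ∧ S ⊆ insert x (downSet σ x ∩ downSet π x) := by
  rw [mem_bestSet_iff, mem_bestSet_iff, insert_inter_distrib, subset_inter_iff]
  tauto

theorem notMem_downSet {n : ℕ} (σ : Equiv.Perm (Fin n)) (x : Fin n) : x ∉ downSet σ x := by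
  simp [downSet]

theorem dTD_eq_sum_mul (n : ℕ) (β : Fin (n - 1) → ℝ) (μ : Fin n → ℝ) (σ π : Equiv.Perm (Fin n)) :
    dTD n β μ σ π = ∑ x, (∑ S ∈ univ.filter (fun S : Finset (Fin n) => 2 ≤ #S),
      if x ∈ topDiff σ π S then menuWeight n β #S else 0) * μ x := by
  simp only [dTD, sum_mul, ite_mul, zero_mul]
  rw [sum_comm]
  refine sum_congr rfl fun S _ => ?_
  rw [sum_ite_mem, univ_inter, mul_sum]
  rfl

theorem sum_menuWeight_ite_subset_insert {n : ℕ} (β : Fin (n - 1) → ℝ) {x : Fin n}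
    {D : Finset (Fin n)} (hx : x ∉ D) :
    ∑ S ∈ univ.filter (fun S : Finset (Fin n) => 2 ≤ #S),
      (if x ∈ S ∧ S ⊆ insert x D then menuWeight n β #S else 0) = fβ n β #D :=
  (sum_two_le_card_ite_subset_insert hx _).trans (sum_range_choose_menuWeight n β _)

theorem stmt4_general (n : ℕ) (β : Fin (n - 1) → ℝ) (μ : Fin n → ℝ)
    (σ π : Equiv.Perm (Fin n)) :
    dTD n β μ σ π =
      ∑ x : Fin n,
        (fβ n β (downSet π x).card + fβ n β (downSet σ x).card
          - 2 * fβ n β ((downSet σ x) ∩ (downSet π x)).card) * μ x := by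
  rw [dTD_eq_sum_mul]
  refine sum_congr rfl fun x _ => congrArg (· * μ x) ?_
  -- `unfold`, not `simp`: the decidability instance of the `if` also mentions `topDiff`.
  unfold topDiff
  simp only [ite_mem_symmDiff, sum_add_distrib, sum_sub_distrib, ← mul_sum,
    mem_bestSet_and_mem_bestSet_iff]
  simp only [mem_bestSet_iff]
  rw [sum_menuWeight_ite_subset_insert β (notMem_downSet σ x),
    sum_menuWeight_ite_subset_insert β (notMem_downSet π x),
    sum_menuWeight_ite_subset_insert β fun h => notMem_downSet σ x (mem_inter.1 h).1, add_comm]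

theorem stmt4 (n : ℕ) (hn : 2 ≤ n) (β : Fin (n - 1) → ℝ) (μ : Fin n → ℝ)
    (σ π : Equiv.Perm (Fin n)) :
    dTD n β μ σ π =
      ∑ x : Fin n,
        (fβ n β (downSet π x).card + fβ n β (downSet σ x).card
          - 2 * fβ n β ((downSet σ x) ∩ (downSet π x)).card) * μ x :=
  stmt4_general n β μ σ π
end
end
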